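/- Let K be a field of characteristic zero, X a finite connected poset, φ ∈ Δ(I(X,K)), and σ : X²_< → K the map with φ(e_{uv}) = σ(u,v) e_{uv} for all u < v (which exists). Then for every x ∈ X and every walk Γ : u_0, u_1, …, u_m in X, φ(e_x)(u_m,u_m) = φ(e_x)(u_0,u_0) − s^+_{σ,Γ}(x) + s^−_{σ,Γ}(x) − t^+_{σ,Γ}(x) + t^−_{σ,Γ}(x). In particular, for every closed walk Γ (one with u_m = u_0), s^+_{σ,Γ}(x) − s^−_{σ,Γ}(x) + t^+_{σ,Γ}(x) − t^−_{σ,Γ}(x) = 0 for all x ∈ X. -/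

import Mathlib

/-!
Bracketing with the idempotent `e_x` scales each `e_{ab}` by `c = [x = a] - [x = b]`, so the
`1/2`-derivation identity applied to `(e_x, e_{ab})` forces `⁅φ e_x, e_{ab}⁆ = c σ(a,b) e_{ab}`.
Reading off the `(a,b)` entry relates the diagonal entries of `φ e_x` at `a` and `b`, and
summing these relations along a walk telescopes to the formula.
-/

open scoped Classical

attribute [local instance 100] LieRing.ofAssociativeRing

noncomputable section

/-- A `1/2`-derivation of a Lie algebra `L` over `K`:
`φ ⁅a, b⁆ = (1/2) • (⁅φ a, b⁆ + ⁅a, φ b⁆)`. -/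
def IsHalfDerivation (K L : Type*) [Field K] [LieRing L] [LieAlgebra K L]
    (φ : L →ₗ[K] L) : Prop :=
  ∀ a b : L, φ ⁅a, b⁆ = (2⁻¹ : K) • (⁅φ a, b⁆ + ⁅a, φ b⁆)

/-- The standard basis element `e_{xy}` (for `x ≤ y`) of the incidence algebra. -/
def eI (K : Type*) {X : Type*} [Field K] [PartialOrder X] [DecidableEq X]
    (x y : X) (h : x ≤ y) : IncidenceAlgebra K X :=
  ⟨fun u v => if x = u ∧ y = v then (1 : K) else 0, by
    intro u v huv
    show (if x = u ∧ y = v then (1 : K) else 0) = 0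
    rw [if_neg]; rintro ⟨rfl, rfl⟩; exact huv h⟩

/-- A walk `u 0, u 1, …, u m` in a poset: consecutive vertices are comparable and
cover one another (`l(x,y) = 1`). -/
def IsWalkOn {X : Type*} [PartialOrder X] (u : ℕ → X) (m : ℕ) : Prop :=
  ∀ i < m, u i ⋖ u (i + 1) ∨ u (i + 1) ⋖ u i

/-- A poset is connected if any two of its elements are joined by a walk. -/
def ConnectedPoset (X : Type*) [PartialOrder X] : Prop :=
  ∀ x y : X, ∃ (u : ℕ → X) (m : ℕ), IsWalkOn u m ∧ u 0 = x ∧ u m = y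

/-- The set `X²_<` of pairs `(x, y)` with `x < y`. -/
def LtPairs (X : Type*) [PartialOrder X] : Type _ := {p : X × X // p.1 < p.2}

/-- The value of `σ : X²_< → K` at `(x, y)`, extended by `0` to all pairs. -/
def sigVal {K X : Type*} [Field K] [PartialOrder X] (σ : LtPairs X → K) (x y : X) : K :=
  if h : x < y then σ ⟨(x, y), h⟩ else 0

/-- `s⁺_{σ,Γ}(x) = Σ_{x = u i < u (i+1)} σ (x, u (i+1))`. -/
def sP {K X : Type*} [Field K] [PartialOrder X] (σ : LtPairs X → K)
    (u : ℕ → X) (m : ℕ) (x : X) : K :=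
  ∑ i ∈ Finset.range m, if x = u i then sigVal σ x (u (i + 1)) else 0

/-- `s⁻_{σ,Γ}(x) = Σ_{u i > u (i+1) = x} σ (x, u i)`. -/
def sM {K X : Type*} [Field K] [PartialOrder X] (σ : LtPairs X → K)
    (u : ℕ → X) (m : ℕ) (x : X) : K :=
  ∑ i ∈ Finset.range m, if x = u (i + 1) then sigVal σ x (u i) else 0

/-- `t⁺_{σ,Γ}(x) = Σ_{x = u i > u (i+1)} σ (u (i+1), x)`. -/
def tP {K X : Type*} [Field K] [PartialOrder X] (σ : LtPairs X → K)
    (u : ℕ → X) (m : ℕ) (x : X) : K :=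
  ∑ i ∈ Finset.range m, if x = u i then sigVal σ (u (i + 1)) x else 0

/-- `t⁻_{σ,Γ}(x) = Σ_{u i < u (i+1) = x} σ (u i, x)`. -/
def tM {K X : Type*} [Field K] [PartialOrder X] (σ : LtPairs X → K)
    (u : ℕ → X) (m : ℕ) (x : X) : K :=
  ∑ i ∈ Finset.range m, if x = u (i + 1) then sigVal σ (u i) x else 0

open Finset

section HalfDerivation

variable {K L : Type*} [Field K] [NeZero (2 : K)] [LieRing L] [LieAlgebra K L]

theorem IsHalfDerivation.lie_map_eq_of_lie_eq_smul {φ : L →ₗ[K] L}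
    (hφ : IsHalfDerivation K L φ) {d e : L} {c s : K} (hde : ⁅d, e⁆ = c • e)
    (he : φ e = s • e) : ⁅φ d, e⁆ = (c * s) • e := by
  have h := hφ d e
  rw [hde, map_smul, he, lie_smul, hde, smul_smul, smul_smul] at h
  calc ⁅φ d, e⁆ = (2 : K) • (2⁻¹ : K) • (⁅φ d, e⁆ + (s * c) • e) - (s * c) • e := by
        rw [smul_smul, mul_inv_cancel₀ two_ne_zero, one_smul, add_sub_cancel_right]
    _ = (c * s) • e := by rw [← h]; module

end HalfDerivation

section Walk

variable {K X : Type*} [Field K] [PartialOrder X] [DecidableEq X]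

omit [DecidableEq X] in
theorem sigVal_self (σ : LtPairs X → K) (x : X) : sigVal σ x x = 0 :=
  dif_neg (lt_irrefl x)

theorem neg_sP_add_sM_sub_tP_add_tM (σ : LtPairs X → K) (u : ℕ → X) (m : ℕ) (x : X) :
    -sP σ u m x + sM σ u m x - tP σ u m x + tM σ u m x
      = ∑ i ∈ range m, ((if x = u (i + 1) then 1 else 0) - if x = u i then 1 else 0)
          * (sigVal σ (u i) (u (i + 1)) + sigVal σ (u (i + 1)) (u i)) := by
  simp only [sP, sM, tP, tM, ← sum_neg_distrib, ← sum_add_distrib, ← sum_sub_distrib]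
  refine sum_congr rfl fun i _ ↦ ?_
  split_ifs with h₀ h₁ h₁
  · rw [← h₀, ← h₁, sigVal_self]; ring
  all_goals subst_vars; ring

end Walk

section IncidenceAlgebra

variable {K X : Type*} [Field K] [PartialOrder X] [LocallyFiniteOrder X] [DecidableEq X]

omit [LocallyFiniteOrder X] in
theorem eI_apply (x y : X) (h : x ≤ y) (u v : X) :
    eI K x y h u v = if x = u ∧ y = v then 1 else 0 := rfl

theorem eI_mul_apply (x y : X) (hxy : x ≤ y) (f : IncidenceAlgebra K X) (u v : X) :
    (eI K x y hxy * f) u v = if x = u then f y v else 0 := by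
  rw [IncidenceAlgebra.mul_apply]
  split_ifs with hxu
  · subst hxu
    by_cases hyv : y ≤ v
    · rw [sum_eq_single_of_mem y (mem_Icc.2 ⟨hxy, hyv⟩) fun z _ hzy ↦ by
        simp [eI_apply, Ne.symm hzy]]
      simp [eI_apply]
    · rw [f.apply_eq_zero_of_not_le hyv]
      exact sum_eq_zero fun z hz ↦ by
        simp only [eI_apply, true_and, ite_mul, one_mul, zero_mul]
        split_ifs with hyz
        · exact absurd (hyz ▸ (mem_Icc.1 hz).2) hyv
        · rfl
  · exact sum_eq_zero fun z _ ↦ by simp [eI_apply, hxu]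

theorem mul_eI_apply (f : IncidenceAlgebra K X) (x y : X) (hxy : x ≤ y) (u v : X) :
    (f * eI K x y hxy) u v = if y = v then f u x else 0 := by
  rw [IncidenceAlgebra.mul_apply]
  split_ifs with hyv
  · subst hyv
    by_cases hux : u ≤ x
    · rw [sum_eq_single_of_mem x (mem_Icc.2 ⟨hux, hxy⟩) fun z _ hzx ↦ by
        simp [eI_apply, Ne.symm hzx]]
      simp [eI_apply]
    · rw [f.apply_eq_zero_of_not_le hux]
      exact sum_eq_zero fun z hz ↦ by
        simp only [eI_apply, and_true, mul_ite, mul_one, mul_zero]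
        split_ifs with hxz
        · exact absurd (hxz ▸ (mem_Icc.1 hz).1) hux
        · rfl
  · exact sum_eq_zero fun z _ ↦ by simp [eI_apply, hyv]

theorem lie_eI_apply_self (f : IncidenceAlgebra K X) (a b : X) (h : a ≤ b) :
    ⁅f, eI K a b h⁆ a b = f a a - f b b := by
  rw [Ring.lie_def, IncidenceAlgebra.sub_apply, mul_eI_apply, eI_mul_apply, if_pos rfl,
    if_pos rfl]

theorem lie_eI_diag_eI (x a b : X) (h : a ≤ b) :
    ⁅eI K x x le_rfl, eI K a b h⁆
      = ((if x = a then 1 else 0) - if x = b then 1 else 0 : K) • eI K a b h := by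
  ext u v
  simp only [Ring.lie_def, IncidenceAlgebra.sub_apply, IncidenceAlgebra.constSMul_apply,
    smul_eq_mul, mul_eI_apply, eI_apply]
  split_ifs <;> grind

variable [NeZero (2 : K)] {φ : IncidenceAlgebra K X →ₗ[K] IncidenceAlgebra K X}

theorem IsHalfDerivation.map_eI_diag_apply_sub
    (hφ : IsHalfDerivation K (IncidenceAlgebra K X) φ)
    (x a b : X) (h : a ≤ b) {s : K} (hs : φ (eI K a b h) = s • eI K a b h) :
    φ (eI K x x le_rfl) b b - φ (eI K x x le_rfl) a a
      = ((if x = b then 1 else 0) - if x = a then 1 else 0) * s := by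
  have hab := congr_arg (· a b) (hφ.lie_map_eq_of_lie_eq_smul (lie_eI_diag_eI x a b h) hs)
  simp only [lie_eI_apply_self, IncidenceAlgebra.constSMul_apply, eI_apply, and_self,
    if_true, smul_eq_mul, mul_one] at hab
  linear_combination -hab

theorem IsHalfDerivation.map_eI_diag_apply_sub_of_comparable
    (hφ : IsHalfDerivation K (IncidenceAlgebra K X) φ) {σ : LtPairs X → K}
    (hσ : ∀ (a b : X) (h : a < b), φ (eI K a b h.le) = σ ⟨(a, b), h⟩ • eI K a b h.le)
    (x p q : X) (hpq : p ≤ q ∨ q ≤ p) :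
    φ (eI K x x le_rfl) q q - φ (eI K x x le_rfl) p p
      = ((if x = q then 1 else 0) - if x = p then 1 else 0)
        * (sigVal σ p q + sigVal σ q p) := by
  rcases hpq with hpq | hqp
  · obtain hpq | rfl := hpq.lt_or_eq
    · rw [hφ.map_eI_diag_apply_sub x p q hpq.le (hσ p q hpq), sigVal, sigVal, dif_pos hpq,
        dif_neg hpq.not_gt, add_zero]
    · simp
  · obtain hqp | rfl := hqp.lt_or_eq
    · rw [sigVal, sigVal, dif_neg hqp.not_gt, dif_pos hqp, zero_add]
      linear_combination -hφ.map_eI_diag_apply_sub x q p hqp.le (hσ q p hqp)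
    · simp

theorem IsHalfDerivation.map_eI_diag_apply_of_comparable_seq
    (hφ : IsHalfDerivation K (IncidenceAlgebra K X) φ) {σ : LtPairs X → K}
    (hσ : ∀ (a b : X) (h : a < b), φ (eI K a b h.le) = σ ⟨(a, b), h⟩ • eI K a b h.le)
    (x : X) {u : ℕ → X} {m : ℕ} (hu : ∀ i < m, u i ≤ u (i + 1) ∨ u (i + 1) ≤ u i) :
    φ (eI K x x le_rfl) (u m) (u m) =
      φ (eI K x x le_rfl) (u 0) (u 0)
        - sP σ u m x + sM σ u m x - tP σ u m x + tM σ u m x := by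
  have telescope := sum_range_sub (fun i ↦ φ (eI K x x le_rfl) (u i) (u i)) m
  rw [sum_congr rfl fun i hi ↦ hφ.map_eI_diag_apply_sub_of_comparable hσ x (u i) (u (i + 1))
    (hu i (mem_range.1 hi)), ← neg_sP_add_sM_sub_tP_add_tM] at telescope
  linear_combination -telescope

end IncidenceAlgebra

theorem statement13_general (K X : Type*) [Field K] [CharZero K] [PartialOrder X]
    [LocallyFiniteOrder X] [DecidableEq X]
    (φ : IncidenceAlgebra K X →ₗ[K] IncidenceAlgebra K X)
    (hφ : IsHalfDerivation K (IncidenceAlgebra K X) φ)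
    (σ : LtPairs X → K)
    (hσ : ∀ (a b : X) (h : a < b), φ (eI K a b h.le) = σ ⟨(a, b), h⟩ • eI K a b h.le) :
    ∀ (x : X) (u : ℕ → X) (m : ℕ), IsWalkOn u m →
      (φ (eI K x x le_rfl) (u m) (u m) =
        φ (eI K x x le_rfl) (u 0) (u 0)
          - sP σ u m x + sM σ u m x - tP σ u m x + tM σ u m x) ∧
      (u m = u 0 → sP σ u m x - sM σ u m x + tP σ u m x - tM σ u m x = 0) := by
  intro x u m hu
  have hdiag := hφ.map_eI_diag_apply_of_comparable_seq hσ x fun i hi ↦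
    (hu i hi).imp CovBy.le CovBy.le
  refine ⟨hdiag, fun hclosed ↦ ?_⟩
  rw [hclosed] at hdiag
  linear_combination hdiag

/-- for `φ ∈ Δ(I(X,K))` with `φ e_{uv} = σ(u,v) e_{uv}` for all `u < v`,
along any walk `Γ : u 0, …, u m` one has
`φ(e_x)(u m, u m) = φ(e_x)(u 0, u 0) − s⁺ + s⁻ − t⁺ + t⁻`, and for closed walks
`s⁺ − s⁻ + t⁺ − t⁻ = 0`. -/
theorem statement13 (K X : Type*) [Field K] [CharZero K] [PartialOrder X] [Fintype X]
    [LocallyFiniteOrder X] [DecidableEq X] (hconn : ConnectedPoset X)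
    (φ : IncidenceAlgebra K X →ₗ[K] IncidenceAlgebra K X)
    (hφ : IsHalfDerivation K (IncidenceAlgebra K X) φ)
    (σ : LtPairs X → K)
    (hσ : ∀ (a b : X) (h : a < b), φ (eI K a b h.le) = σ ⟨(a, b), h⟩ • eI K a b h.le) :
    ∀ (x : X) (u : ℕ → X) (m : ℕ), IsWalkOn u m →
      (φ (eI K x x le_rfl) (u m) (u m) =
        φ (eI K x x le_rfl) (u 0) (u 0)
          - sP σ u m x + sM σ u m x - tP σ u m x + tM σ u m x) ∧
      (u m = u 0 → sP σ u m x - sM σ u m x + tP σ u m x - tM σ u m x = 0) :=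
  statement13_general K X φ hφ σ hσ
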